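/- For a nonnegative integrable random variable X with E[X] > 0, the Gini index representations coincide: 2·Cov(X, F_X(X))/E[X] = E[|X − X'|]/(2E[X]) = (1/E[X])·∫₀^∞ F_X(z)(1 − F_X(z)) dz, where X' is an independent copy of X and F_X is assumed continuous. -/

import Mathlib

/-!
Let `ν` be the law of `X` and `F` its distribution function. Continuity of `F` means that `ν` has
no atoms, so the maximum of the i.i.d. pair `(X, X')` has distribution function `F²` and
`E[f(max(X, X'))] = 2 E[f(X) F(X)]`. For `f = 1` this gives `E[F(X)] = 1/2`, and for `f = id`,
together with `|x - y| = 2 max(x, y) - x - y`, it gives `E|X - X'| = 4 E[X F(X)] - 2 E[X]`, that is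
`4 Cov(X, F(X))`. On the other hand `|x - y|` is the length of the interval between `x` and `y`,
so Tonelli gives `E|X - X'| = 2 ∫ F(z)(1 - F(z)) dz`.
-/

open MeasureTheory ProbabilityTheory

/-- Distribution function of `X` under `μ`. -/
noncomputable def cdf' {Ω : Type*} [MeasurableSpace Ω] (μ : Measure Ω) (X : Ω → ℝ) :
    ℝ → ℝ :=
  fun t => (μ {ω | X ω ≤ t}).toReal

/-- Generalized inverse (quantile function) of the cdf of `X`. -/
noncomputable def quantile {Ω : Type*} [MeasurableSpace Ω] (μ : Measure Ω) (X : Ω → ℝ)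
    (p : ℝ) : ℝ :=
  sInf {x : ℝ | p ≤ cdf' μ X x}

/-- Lorenz curve `LC_p(X) = E[X·1{X ≤ F_X⁻¹(p)}] / E[X]`. -/
noncomputable def LC {Ω : Type*} [MeasurableSpace Ω] (μ : Measure Ω) (X : Ω → ℝ)
    (p : ℝ) : ℝ :=
  (∫ ω in {ω | X ω ≤ quantile μ X p}, X ω ∂μ) / ∫ ω, X ω ∂μ

/-- Concentration curve `CC_p(Y,X) = E[Y·1{X ≤ F_X⁻¹(p)}] / E[Y]`. -/
noncomputable def CC {Ω : Type*} [MeasurableSpace Ω] (μ : Measure Ω) (Y X : Ω → ℝ)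
    (p : ℝ) : ℝ :=
  (∫ ω in {ω | X ω ≤ quantile μ X p}, Y ω ∂μ) / ∫ ω, Y ω ∂μ

open Set ENNReal

lemma setLIntegral_prod_comp_fst {α β : Type*} [MeasurableSpace α] [MeasurableSpace β]
    {μ : Measure α} {ν : Measure β} [SFinite ν] {s : Set (α × β)} (hs : MeasurableSet s)
    {f : α → ℝ≥0∞} (hf : Measurable f) :
    ∫⁻ p in s, f p.1 ∂μ.prod ν = ∫⁻ x, f x * ν (Prod.mk x ⁻¹' s) ∂μ := by
  rw [← lintegral_indicator hs, lintegral_prod (s.indicator fun p => f p.1)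
    ((hf.comp measurable_fst).indicator hs).aemeasurable]
  refine lintegral_congr fun x => ?_
  rw [← lintegral_indicator_const (measurable_prodMk_left hs)]
  rfl

namespace ProbabilityTheory

variable {ν : Measure ℝ}

lemma nullSingletonClass_of_continuous_cdf [IsProbabilityMeasure ν] (h : Continuous (cdf ν)) :
    NullSingletonClass ν where
  measure_singleton x := by
    rw [← measure_cdf (μ := ν), StieltjesFunction.measure_singleton,
      h.continuousWithinAt.leftLim_eq, sub_self, ofReal_zero]

lemma lintegral_comp_max_prod [SFinite ν] [NullSingletonClass ν] {f : ℝ → ℝ≥0∞}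
    (hf : Measurable f) :
    ∫⁻ p, f (max p.1 p.2) ∂ν.prod ν = 2 * ∫⁻ x, f x * ν (Iic x) ∂ν := by
  set s : Set (ℝ × ℝ) := {p | p.2 ≤ p.1}
  have hs : MeasurableSet s := measurableSet_le measurable_snd measurable_fst
  have hmax : Measurable fun p : ℝ × ℝ => f (max p.1 p.2) :=
    hf.comp (measurable_fst.max measurable_snd)
  have h_on : ∫⁻ p in s, f (max p.1 p.2) ∂ν.prod ν = ∫⁻ x, f x * ν (Iic x) ∂ν := by
    rw [setLIntegral_congr_fun hs fun p hp => by rw [max_eq_left hp],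
      setLIntegral_prod_comp_fst hs hf]
    rfl
  have h_off : ∫⁻ p in sᶜ, f (max p.1 p.2) ∂ν.prod ν = ∫⁻ x, f x * ν (Iic x) ∂ν := by
    have ht : MeasurableSet {p : ℝ × ℝ | p.2 < p.1} :=
      measurableSet_lt measurable_snd measurable_fst
    rw [← Measure.prod_swap, setLIntegral_map hs.compl hmax measurable_swap,
      show Prod.swap ⁻¹' sᶜ = {p : ℝ × ℝ | p.2 < p.1} by ext; simp [s],
      setLIntegral_congr_fun ht (g := fun p => f p.1) fun p (hp : p.2 < p.1) => by
        simp [max_eq_right hp.le],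
      setLIntegral_prod_comp_fst ht hf]
    exact lintegral_congr fun x => by
      rw [show Prod.mk x ⁻¹' _ = Iio x from rfl, measure_congr Iio_ae_eq_Iic]
  rw [← lintegral_add_compl _ hs, h_on, h_off, two_mul]

lemma lintegral_measure_Iic_eq_half [IsProbabilityMeasure ν] [NullSingletonClass ν] :
    ∫⁻ x, ν (Iic x) ∂ν = 2⁻¹ := by
  have h := lintegral_comp_max_prod (ν := ν) (f := fun _ => 1) measurable_const
  simp only [lintegral_const, measure_univ, one_mul] at h
  exact ENNReal.eq_inv_of_mul_eq_one_left (by rw [mul_comm, ← h])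

lemma integral_cdf_eq_half [IsProbabilityMeasure ν] [NullSingletonClass ν] :
    ∫ x, cdf ν x ∂ν = 2⁻¹ := by
  rw [integral_eq_lintegral_of_nonneg_ae (ae_of_all _ (cdf_nonneg ν))
    (monotone_cdf ν).measurable.aestronglyMeasurable]
  simp_rw [ofReal_cdf]
  rw [lintegral_measure_Iic_eq_half, toReal_inv, toReal_ofNat]

lemma lintegral_ofReal_sub_prod [SFinite ν] :
    ∫⁻ p, ENNReal.ofReal (p.1 - p.2) ∂ν.prod ν = ∫⁻ z, ν (Ioi z) * ν (Iic z) := by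
  have hmeas : Measurable (Function.uncurry fun (p : ℝ × ℝ) (z : ℝ) =>
      (Ico p.2 p.1).indicator (1 : ℝ → ℝ≥0∞) z) := by
    change Measurable
      ({w : (ℝ × ℝ) × ℝ | w.1.2 ≤ w.2 ∧ w.2 < w.1.1}.indicator (1 : (ℝ × ℝ) × ℝ → ℝ≥0∞))
    exact measurable_one.indicator ((measurableSet_le measurable_fst.snd measurable_snd).inter
      (measurableSet_lt measurable_snd measurable_fst.fst))
  calc ∫⁻ p, ENNReal.ofReal (p.1 - p.2) ∂ν.prod ν
      = ∫⁻ p : ℝ × ℝ, (∫⁻ z, (Ico p.2 p.1).indicator 1 z) ∂ν.prod ν := by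
        simp_rw [lintegral_indicator_one measurableSet_Ico, Real.volume_Ico]
    _ = ∫⁻ z, ∫⁻ p, (Ioi z ×ˢ Iic z).indicator 1 p ∂ν.prod ν := by
        rw [lintegral_lintegral_swap hmeas.aemeasurable]
        refine lintegral_congr fun z => lintegral_congr fun p => ?_
        simp only [indicator_apply, mem_Ico, mem_prod, mem_Ioi, mem_Iic, and_comm, Pi.one_apply]
    _ = ∫⁻ z, ν (Ioi z) * ν (Iic z) := by
        simp_rw [lintegral_indicator_one (measurableSet_Ioi.prod measurableSet_Iic),
          Measure.prod_prod]

lemma lintegral_ofReal_abs_sub_prod [SFinite ν] :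
    ∫⁻ p, ENNReal.ofReal |p.1 - p.2| ∂ν.prod ν = 2 * ∫⁻ z, ν (Ioi z) * ν (Iic z) := by
  have habs (a : ℝ) : ENNReal.ofReal |a| = ENNReal.ofReal a + ENNReal.ofReal (-a) := by
    rcases le_total 0 a with ha | ha
    · simp [abs_of_nonneg ha, ofReal_of_nonpos (neg_nonpos.2 ha)]
    · simp [abs_of_nonpos ha, ofReal_of_nonpos ha]
  have hswap : ∫⁻ p, ENNReal.ofReal (-(p.1 - p.2)) ∂ν.prod ν
      = ∫⁻ p, ENNReal.ofReal (p.1 - p.2) ∂ν.prod ν := by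
    rw [← lintegral_prod_swap]
    simp
  simp_rw [habs]
  rw [lintegral_add_left (f := fun p : ℝ × ℝ => ENNReal.ofReal (p.1 - p.2)) (by fun_prop),
    hswap, lintegral_ofReal_sub_prod, two_mul]

lemma lintegral_measure_Ioi_mul_Iic_eq_setLIntegral_Ioi_zero (h0 : ∀ᵐ x ∂ν, 0 ≤ x) :
    ∫⁻ z, ν (Ioi z) * ν (Iic z) = ∫⁻ z in Ioi 0, ν (Ioi z) * ν (Iic z) := by
  rw [setLIntegral_congr Ioi_ae_eq_Ici, setLIntegral_eq_of_support_subset]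
  intro z hz
  by_contra hneg
  refine hz (mul_eq_zero_of_right _ (measure_mono_null (fun x hx => ?_) (ae_iff.1 h0)))
  exact fun hx0 => hneg (hx0.trans hx)

lemma integral_abs_sub_prod_eq_two_mul_setIntegral_cdf_mul [IsProbabilityMeasure ν]
    (h0 : ∀ᵐ x ∂ν, 0 ≤ x) :
    ∫ p, |p.1 - p.2| ∂ν.prod ν = 2 * ∫ z in Ioi 0, cdf ν z * (1 - cdf ν z) := by
  have hmeas : Measurable fun z => ν (Ioi z) * ν (Iic z) :=
    (Antitone.measurable fun _ _ h => measure_mono (Ioi_subset_Ioi h)).mul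
      (Monotone.measurable fun _ _ h => measure_mono (Iic_subset_Iic.2 h))
  rw [integral_eq_lintegral_of_nonneg_ae (ae_of_all _ fun _ => abs_nonneg _) (by fun_prop),
    lintegral_ofReal_abs_sub_prod, lintegral_measure_Ioi_mul_Iic_eq_setLIntegral_Ioi_zero h0,
    toReal_mul, ← integral_toReal hmeas.aemeasurable (ae_of_all _ fun _ => by finiteness)]
  congr 2 with z
  rw [toReal_mul, ← measureReal_def, ← measureReal_def, cdf_eq_real, ← compl_Iic,
    probReal_compl_eq_one_sub measurableSet_Iic, mul_comm]

lemma lintegral_ofReal_abs_sub_prod_add_two_mul [IsProbabilityMeasure ν] [NullSingletonClass ν]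
    (h0 : ∀ᵐ x ∂ν, 0 ≤ x) :
    ∫⁻ p, ENNReal.ofReal |p.1 - p.2| ∂ν.prod ν + 2 * ∫⁻ x, ENNReal.ofReal x ∂ν
      = 4 * ∫⁻ x, ENNReal.ofReal x * ν (Iic x) ∂ν := by
  have h0' : ∀ᵐ p ∂ν.prod ν, 0 ≤ p.1 ∧ 0 ≤ p.2 :=
    (measurePreserving_fst.quasiMeasurePreserving.ae h0).and
      (measurePreserving_snd.quasiMeasurePreserving.ae h0)
  have hsum : ∫⁻ p, ENNReal.ofReal p.1 + ENNReal.ofReal p.2 ∂ν.prod ν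
      = 2 * ∫⁻ x, ENNReal.ofReal x ∂ν := by
    rw [lintegral_add_left (by fun_prop), measurePreserving_fst.lintegral_comp (by fun_prop),
      measurePreserving_snd.lintegral_comp (by fun_prop), two_mul]
  rw [show (4 : ℝ≥0∞) = 2 * 2 by norm_num, mul_assoc,
    ← lintegral_comp_max_prod ENNReal.measurable_ofReal, ← hsum,
    ← lintegral_add_left (by fun_prop), ← lintegral_const_mul _ (by fun_prop)]
  refine lintegral_congr_ae (h0'.mono fun p ⟨hx, hy⟩ => ?_)
  dsimp only
  rw [← ofReal_add hx hy, ← ofReal_add (abs_nonneg _) (add_nonneg hx hy),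
    ← ofReal_ofNat 2, ← ofReal_mul zero_le_two]
  congr 1
  rcases le_total p.1 p.2 with h | h
  · rw [abs_of_nonpos (sub_nonpos.2 h), max_eq_right h]; ring
  · rw [abs_of_nonneg (sub_nonneg.2 h), max_eq_left h]; ring

lemma integral_abs_sub_prod_eq_four_mul_integral_mul_cdf [IsProbabilityMeasure ν]
    [NullSingletonClass ν] (h0 : ∀ᵐ x ∂ν, 0 ≤ x) (hint : Integrable (fun x => x) ν) :
    ∫ p, |p.1 - p.2| ∂ν.prod ν = 4 * ∫ x, x * cdf ν x ∂ν - 2 * ∫ x, x ∂ν := by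
  have hkey := lintegral_ofReal_abs_sub_prod_add_two_mul h0
  set meanAbsSub := ∫⁻ p, ENNReal.ofReal |p.1 - p.2| ∂ν.prod ν
  set mean := ∫⁻ x, ENNReal.ofReal x ∂ν
  set meanMulCdf := ∫⁻ x, ENNReal.ofReal x * ν (Iic x) ∂ν
  have hmean : mean ≠ ⊤ := hint.lintegral_lt_top.ne
  have hmeanMulCdf : meanMulCdf ≠ ⊤ :=
    ne_top_of_le_ne_top hmean (lintegral_mono fun x => mul_le_of_le_one_right' prob_le_one)
  have hmeanAbsSub : meanAbsSub ≠ ⊤ :=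
    ne_top_of_le_ne_top (mul_ne_top ofNat_ne_top hmeanMulCdf) (hkey ▸ le_self_add)
  have hmean_eq : ∫ x, x ∂ν = mean.toReal := integral_eq_lintegral_of_nonneg_ae h0 (by fun_prop)
  have hmeanMulCdf_eq : ∫ x, x * cdf ν x ∂ν = meanMulCdf.toReal := by
    rw [integral_eq_lintegral_of_nonneg_ae (h0.mono fun x hx => mul_nonneg hx (cdf_nonneg ν x))
      (measurable_id.mul (monotone_cdf ν).measurable).aestronglyMeasurable]
    congr 1
    exact lintegral_congr_ae (h0.mono fun x hx => by dsimp only; rw [ofReal_mul hx, ofReal_cdf])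
  have hmeanAbsSub_eq : ∫ p, |p.1 - p.2| ∂ν.prod ν = meanAbsSub.toReal :=
    integral_eq_lintegral_of_nonneg_ae (ae_of_all _ fun _ => abs_nonneg _) (by fun_prop)
  have hreal := congrArg ENNReal.toReal hkey
  rw [toReal_add hmeanAbsSub (mul_ne_top ofNat_ne_top hmean)] at hreal
  simp only [toReal_mul, toReal_ofNat] at hreal
  rw [hmean_eq, hmeanMulCdf_eq, hmeanAbsSub_eq]
  linarith

end ProbabilityTheory

lemma cdf'_eq_cdf_map {Ω : Type*} [MeasurableSpace Ω] {μ : Measure Ω} [IsProbabilityMeasure μ]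
    {X : Ω → ℝ} (hX : AEMeasurable X μ) : cdf' μ X = cdf (μ.map X) := by
  have := Measure.isProbabilityMeasure_map hX
  ext t
  rw [cdf_eq_real, measureReal_def, Measure.map_apply_of_aemeasurable hX measurableSet_Iic]
  rfl

theorem gini_representations_general
    {Ω : Type*} {m0 : MeasurableSpace Ω} (μ : Measure Ω) [IsProbabilityMeasure μ]
    (X X' : Ω → ℝ)
    (hXint : Integrable X μ) (hX0 : 0 ≤ᵐ[μ] X)
    (hFcont : Continuous (cdf' μ X))
    (hcopy : IdentDistrib X X' μ μ) (hindep : IndepFun X X' μ) :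
    2 * ((∫ ω, X ω * cdf' μ X (X ω) ∂μ)
          - (∫ ω, X ω ∂μ) * ∫ ω, cdf' μ X (X ω) ∂μ) / (∫ ω, X ω ∂μ)
        = (∫ ω, |X ω - X' ω| ∂μ) / (2 * ∫ ω, X ω ∂μ)
    ∧ (∫ ω, |X ω - X' ω| ∂μ) / (2 * ∫ ω, X ω ∂μ)
        = (∫ z in Set.Ioi (0:ℝ), cdf' μ X z * (1 - cdf' μ X z)) / ∫ ω, X ω ∂μ := by
  have hX := hcopy.aemeasurable_fst
  rw [cdf'_eq_cdf_map hX] at hFcont ⊢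
  set ν := μ.map X
  have : IsProbabilityMeasure ν := Measure.isProbabilityMeasure_map hX
  have : NullSingletonClass ν := nullSingletonClass_of_continuous_cdf hFcont
  have hν0 : ∀ᵐ x ∂ν, 0 ≤ x := (ae_map_iff hX measurableSet_Ici).2 hX0
  have hjoint : μ.map (fun ω => (X ω, X' ω)) = ν.prod ν := by
    rw [(indepFun_iff_map_prod_eq_prod_map_map hX hcopy.aemeasurable_snd).1 hindep,
      ← hcopy.map_eq]
  have hmean : ∫ ω, X ω ∂μ = ∫ x, x ∂ν := (integral_map hX aestronglyMeasurable_id).symm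
  have hmeanMulCdf : ∫ ω, X ω * cdf ν (X ω) ∂μ = ∫ x, x * cdf ν x ∂ν :=
    (integral_map hX (continuous_id.mul hFcont).aestronglyMeasurable).symm
  have hmeanCdf : ∫ ω, cdf ν (X ω) ∂μ = 2⁻¹ := by
    rw [← integral_cdf_eq_half (ν := ν), integral_map hX hFcont.aestronglyMeasurable]
  have hmeanAbsSub : ∫ ω, |X ω - X' ω| ∂μ = ∫ p, |p.1 - p.2| ∂ν.prod ν := by
    rw [← hjoint, integral_map (hX.prodMk hcopy.aemeasurable_snd) (by fun_prop)]
  have hint : Integrable (fun x => x) ν :=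
    (integrable_map_measure aestronglyMeasurable_id hX).2 hXint
  rw [hmean, hmeanMulCdf, hmeanCdf, hmeanAbsSub]
  constructor
  · rw [integral_abs_sub_prod_eq_four_mul_integral_mul_cdf hν0 hint,
      show 4 * ∫ x, x * cdf ν x ∂ν - 2 * ∫ x, x ∂ν
        = 2 * (2 * ((∫ x, x * cdf ν x ∂ν) - (∫ x, x ∂ν) * 2⁻¹)) by ring,
      mul_div_mul_left _ _ two_ne_zero]
  · rw [integral_abs_sub_prod_eq_two_mul_setIntegral_cdf_mul hν0,
      mul_div_mul_left _ _ two_ne_zero]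

/-- equality of the Gini index representations:
`2·Cov(X, F_X(X))/E[X] = E[|X − X'|]/(2E[X]) = (1/E[X])·∫₀^∞ F_X(z)(1−F_X(z)) dz`. -/
theorem gini_representations
    {Ω : Type*} {m0 : MeasurableSpace Ω} (μ : Measure Ω) [IsProbabilityMeasure μ]
    (X X' : Ω → ℝ) (hX : Measurable X) (hX' : Measurable X')
    (hXint : Integrable X μ) (hX0 : 0 ≤ᵐ[μ] X)
    (hpos : 0 < ∫ ω, X ω ∂μ)
    (hFcont : Continuous (cdf' μ X))
    (hcopy : IdentDistrib X X' μ μ) (hindep : IndepFun X X' μ)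
    (hintXF : Integrable (fun ω => X ω * cdf' μ X (X ω)) μ)
    (hintabs : Integrable (fun ω => |X ω - X' ω|) μ) :
    2 * ((∫ ω, X ω * cdf' μ X (X ω) ∂μ)
          - (∫ ω, X ω ∂μ) * ∫ ω, cdf' μ X (X ω) ∂μ) / (∫ ω, X ω ∂μ)
        = (∫ ω, |X ω - X' ω| ∂μ) / (2 * ∫ ω, X ω ∂μ)
    ∧ (∫ ω, |X ω - X' ω| ∂μ) / (2 * ∫ ω, X ω ∂μ)
        = (∫ z in Set.Ioi (0:ℝ), cdf' μ X z * (1 - cdf' μ X z)) / ∫ ω, X ω ∂μ :=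
  gini_representations_general (m0 := m0) μ X X' hXint hX0 hFcont hcopy hindep
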